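/- arXiv:1104.1230 — 2 statements merged into one kernel-verified Lean document; each statement's English description precedes it below -/
import Mathlib

section
/- Every bounded above cochain complex X of left Ω-modules whose cohomology modules H^i(X) are all finitely generated over Ω admits a quasi-isomorphic subcomplex of finitely generated modules: there exist a cochain complex Y in which every term Y^i is a finitely generated Ω-module and a morphism of complexes Y → X that is injective in every degree and is a quasi-isomorphism. -/
/-!
Choose `n` with `X^i = 0` for `i ≥ n` and build `Y^j ⊆ X^j` by descending induction on `j`,
starting from `Y^j = 0` for `j ≥ n`. Given a finitely generated `Y^{j+1}`, let `Y^j` be spanned by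
finitely many cycles whose classes generate `H^j(X)`, together with preimages under `d` of
finitely many generators of `Y^{j+1} ∩ d(X^j)`; this intersection is finitely generated because
`Ω` is Noetherian. The cycles make `H^j(Y) → H^j(X)` surjective, the preimages make
`H^{j+1}(Y) → H^{j+1}(X)` injective.
-/

open CategoryTheory

namespace Submodule

variable {R M N : Type*} [Ring R] [AddCommGroup M] [Module R M] [AddCommGroup N] [Module R N]

lemma FG.exists_fg_map_eq {f : M →ₗ[R] N} {P : Submodule R N} (hP : P.FG)
    (hPf : P ≤ LinearMap.range f) : ∃ Q : Submodule R M, Q.FG ∧ Q.map f = P := by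
  classical
  obtain ⟨s, rfl⟩ := hP
  have hs : (s : Set N) ⊆ f '' Set.univ := by
    rw [Set.image_univ]
    exact subset_span.trans hPf
  obtain ⟨t, -, rfl⟩ := Finset.subset_set_image_iff.1 hs
  exact ⟨span R t, ⟨t, rfl⟩, by rw [map_span, Finset.coe_image]⟩

lemma exists_fg_le_sup_of_finite_quotient (K N : Submodule R M)
    [Module.Finite R (K ⧸ N.comap K.subtype)] :
    ∃ F : Submodule R M, F.FG ∧ F ≤ K ∧ K ≤ F ⊔ N := by
  obtain ⟨Q, hQ, hQtop⟩ := (Module.Finite.fg_top (R := R)).exists_fg_map_eq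
    (f := (N.comap K.subtype).mkQ) (by rw [range_mkQ])
  rw [map_mkQ_eq_top] at hQtop
  refine ⟨Q.map K.subtype, hQ.map _, map_subtype_le _ _, ?_⟩
  calc K = (N.comap K.subtype ⊔ Q).map K.subtype := by rw [hQtop, map_subtype_top]
    _ = (N.comap K.subtype).map K.subtype ⊔ Q.map K.subtype := map_sup _ _ _
    _ ≤ N ⊔ Q.map K.subtype := sup_le_sup_right (map_comap_le _ _) _
    _ = Q.map K.subtype ⊔ N := sup_comm _ _

variable {M₁ M₂ M₃ : Type*} [AddCommGroup M₁] [Module R M₁] [AddCommGroup M₂] [Module R M₂]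
  [AddCommGroup M₃] [Module R M₃]

lemma exists_fg_of_finite_homology [IsNoetherianRing R] (f : M₁ →ₗ[R] M₂) (g : M₂ →ₗ[R] M₃)
    [Module.Finite R (LinearMap.ker g ⧸ (LinearMap.range f).comap (LinearMap.ker g).subtype)]
    {T : Submodule R M₃} (hT : T.FG) :
    ∃ Y : Submodule R M₂, Y.FG ∧ Y.map g ≤ T ∧
      LinearMap.ker g ≤ Y ⊓ LinearMap.ker g ⊔ LinearMap.range f ∧
      T ⊓ LinearMap.range g ≤ Y.map g := by
  obtain ⟨F, hF, hFker, hkerF⟩ :=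
    exists_fg_le_sup_of_finite_quotient (LinearMap.ker g) (LinearMap.range f)
  obtain ⟨G, hG, hGT⟩ := (hT.of_le inf_le_left).exists_fg_map_eq (f := g) inf_le_right
  refine ⟨F ⊔ G, hF.sup hG, ?_, ?_, ?_⟩
  · rw [map_sup, hGT, LinearMap.le_ker_iff_map.1 hFker]
    exact sup_le bot_le inf_le_left
  · exact hkerF.trans (sup_le_sup_right (le_inf le_sup_left hFker) _)
  · rw [map_sup, hGT]
    exact le_sup_right

end Submodule

namespace CategoryTheory.ShortComplex

variable {R : Type*} [Ring R] {S₁ S₂ : ShortComplex (ModuleCat R)}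

lemma quasiIso_of_moduleCat (φ : S₁ ⟶ S₂)
    (hinj : ∀ y, S₁.g y = 0 → φ.τ₂ y ∈ LinearMap.range S₂.f.hom → y ∈ LinearMap.range S₁.f.hom)
    (hsurj : ∀ z, S₂.g z = 0 → ∃ y, S₁.g y = 0 ∧ z - φ.τ₂ y ∈ LinearMap.range S₂.f.hom) :
    QuasiIso φ := by
  let h₁ := S₁.moduleCatLeftHomologyData
  let h₂ := S₂.moduleCatLeftHomologyData
  let ψ : LinearMap.ker S₁.g.hom → LinearMap.ker S₂.g.hom := cyclesMap' φ h₁ h₂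
  have hψ (y : LinearMap.ker S₁.g.hom) : (ψ y : S₂.X₂) = φ.τ₂ y :=
    congr($(cyclesMap'_i φ h₁ h₂) y)
  let H : (LinearMap.ker S₁.g.hom ⧸ LinearMap.range S₁.moduleCatToCycles) →ₗ[R]
      (LinearMap.ker S₂.g.hom ⧸ LinearMap.range S₂.moduleCatToCycles) :=
    (leftHomologyMap' φ h₁ h₂).hom
  have hH (y : LinearMap.ker S₁.g.hom) :
      H (Submodule.Quotient.mk y) = Submodule.Quotient.mk (ψ y) :=
    congr($(leftHomologyπ_naturality' φ h₁ h₂) y)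
  rw [quasiIso_iff_isIso_leftHomologyMap' φ h₁ h₂, ConcreteCategory.isIso_iff_bijective]
  change Function.Bijective H
  constructor
  · rw [injective_iff_map_eq_zero]
    intro q hq
    obtain ⟨y, rfl⟩ := Submodule.Quotient.mk_surjective _ q
    rw [hH, Submodule.Quotient.mk_eq_zero] at hq
    obtain ⟨x, hx⟩ := hq
    obtain ⟨x', hx'⟩ := hinj y y.2 ⟨x, by rw [← hψ]; exact congr(Subtype.val $hx)⟩
    exact (Submodule.Quotient.mk_eq_zero _).2 ⟨x', Subtype.ext hx'⟩
  · intro q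
    obtain ⟨z, rfl⟩ := Submodule.Quotient.mk_surjective _ q
    obtain ⟨y, hy, x, hx⟩ := hsurj z z.2
    refine ⟨Submodule.Quotient.mk ⟨y, hy⟩, ?_⟩
    rw [hH, eq_comm, Submodule.Quotient.eq]
    refine ⟨x, Subtype.ext ?_⟩
    rw [Submodule.coe_sub, hψ]
    exact hx

end CategoryTheory.ShortComplex

namespace HomologicalComplex

variable {R : Type*} [Ring R] {ι : Type*} {c : ComplexShape ι}
  (X : HomologicalComplex (ModuleCat R) c)

lemma finite_ker_quotient_range {i j k : ι} (hi : c.prev j = i) (hk : c.next j = k)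
    [Module.Finite R (X.homology j)] :
    Module.Finite R (LinearMap.ker (X.d j k).hom ⧸
      (LinearMap.range (X.d i j).hom).comap (LinearMap.ker (X.d j k).hom).subtype) := by
  rw [← LinearMap.range_codRestrict _ _ (X.sc' i j k).moduleCat_zero_apply]
  exact Module.Finite.equiv
    (X.homologyIsoSc' i j k hi hk ≪≫ ShortComplex.moduleCatHomologyIso _).toLinearEquiv

variable (S : ∀ i, Submodule R (X.X i)) (hS : ∀ i j, ∀ x ∈ S i, X.d i j x ∈ S j)

noncomputable def subcomplex : HomologicalComplex (ModuleCat R) c where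
  X i := ModuleCat.of R (S i)
  d i j := ModuleCat.ofHom ((X.d i j).hom.restrict (hS i j))
  shape i j h := by ext x; exact congr($(X.shape i j h) x.1)
  d_comp_d' i j k _ _ := by ext x; exact congr($(X.d_comp_d i j k) x.1)

noncomputable def subcomplexι : X.subcomplex S hS ⟶ X where
  f i := ModuleCat.ofHom (S i).subtype

lemma subcomplexι_f_injective (i : ι) : Function.Injective ((X.subcomplexι S hS).f i) :=
  Subtype.val_injective

lemma quasiIsoAt_subcomplexι {i j k : ι} (hi : c.prev j = i) (hk : c.next j = k)
    (hcycles : LinearMap.ker (X.d j k).hom ≤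
      S j ⊓ LinearMap.ker (X.d j k).hom ⊔ LinearMap.range (X.d i j).hom)
    (hboundaries : S j ⊓ LinearMap.range (X.d i j).hom ≤ (S i).map (X.d i j).hom) :
    QuasiIsoAt (X.subcomplexι S hS) j := by
  rw [quasiIsoAt_iff' _ i j k hi hk]
  apply ShortComplex.quasiIso_of_moduleCat
  · rintro y - ⟨x, hx⟩
    obtain ⟨w, hw, hwy⟩ := hboundaries ⟨y.2, x, hx⟩
    exact ⟨⟨w, hw⟩, Subtype.ext hwy⟩
  · intro (z : X.X j) hz
    obtain ⟨y, ⟨hyS, hy⟩, b, hb, hyb⟩ := Submodule.mem_sup.1 (hcycles hz)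
    refine ⟨⟨y, hyS⟩, Subtype.ext hy, ?_⟩
    change z - y ∈ _
    rwa [← hyb, add_sub_cancel_left]

end HomologicalComplex

namespace CochainComplex

variable {R : Type*} [Ring R] (X : CochainComplex (ModuleCat R) ℤ)
  [∀ j, Module.Finite R (X.homology j)]

instance (j : ℤ) : Module.Finite R (LinearMap.ker (X.d j (j + 1)).hom ⧸
    (LinearMap.range (X.d (j - 1) j).hom).comap (LinearMap.ker (X.d j (j + 1)).hom).subtype) :=
  X.finite_ker_quotient_range (by simp) (by simp)

variable [IsNoetherianRing R]

noncomputable def fgSubcomplexTerm (n j : ℤ) : {T : Submodule R (X.X j) // T.FG} :=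
  if n ≤ j then ⟨⊥, Submodule.fg_bot⟩ else
    let hY := Submodule.exists_fg_of_finite_homology (X.d (j - 1) j).hom (X.d j (j + 1)).hom
      (fgSubcomplexTerm n (j + 1)).2
    ⟨hY.choose, hY.choose_spec.1⟩
termination_by (n - j).toNat
decreasing_by omega

variable {X}

lemma fgSubcomplexTerm_of_le {n j : ℤ} (h : n ≤ j) : (X.fgSubcomplexTerm n j).1 = ⊥ := by
  rw [fgSubcomplexTerm.eq_1, if_pos h]

lemma fgSubcomplexTerm_spec {n j : ℤ} (h : ¬n ≤ j) :
    (X.fgSubcomplexTerm n j).1.map (X.d j (j + 1)).hom ≤ (X.fgSubcomplexTerm n (j + 1)).1 ∧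
    LinearMap.ker (X.d j (j + 1)).hom ≤ (X.fgSubcomplexTerm n j).1 ⊓
      LinearMap.ker (X.d j (j + 1)).hom ⊔ LinearMap.range (X.d (j - 1) j).hom ∧
    (X.fgSubcomplexTerm n (j + 1)).1 ⊓ LinearMap.range (X.d j (j + 1)).hom ≤
      (X.fgSubcomplexTerm n j).1.map (X.d j (j + 1)).hom := by
  rw [fgSubcomplexTerm.eq_1 X n j, if_neg h]
  exact (Submodule.exists_fg_of_finite_homology _ _ (X.fgSubcomplexTerm n (j + 1)).2).choose_spec.2

variable (X) in
lemma d_mem_fgSubcomplexTerm (n i j : ℤ) {x : X.X i} (hx : x ∈ (X.fgSubcomplexTerm n i).1) :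
    X.d i j x ∈ (X.fgSubcomplexTerm n j).1 := by
  by_cases hij : i + 1 = j
  · subst hij
    by_cases h : n ≤ i
    · rw [fgSubcomplexTerm_of_le h, Submodule.mem_bot] at hx
      rw [hx, map_zero]
      exact zero_mem _
    · exact (fgSubcomplexTerm_spec h).1 (Submodule.mem_map_of_mem hx)
  · rw [X.shape i j hij]
    exact zero_mem _

lemma ker_d_le_fgSubcomplexTerm_sup_range {n : ℤ} (hn : ∀ i, n ≤ i → Limits.IsZero (X.X i))
    (j : ℤ) : LinearMap.ker (X.d j (j + 1)).hom ≤ (X.fgSubcomplexTerm n j).1 ⊓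
      LinearMap.ker (X.d j (j + 1)).hom ⊔ LinearMap.range (X.d (j - 1) j).hom := by
  by_cases h : n ≤ j
  · have := ModuleCat.subsingleton_of_isZero (hn j h)
    rw [Subsingleton.elim (LinearMap.ker _) ⊥]
    exact bot_le
  · exact (fgSubcomplexTerm_spec h).2.1

lemma fgSubcomplexTerm_inf_range_le (n : ℤ) {i j : ℤ} (hij : i + 1 = j) :
    (X.fgSubcomplexTerm n j).1 ⊓ LinearMap.range (X.d i j).hom ≤
      (X.fgSubcomplexTerm n i).1.map (X.d i j).hom := by
  subst hij
  by_cases h : n ≤ i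
  · rw [fgSubcomplexTerm_of_le (by omega : n ≤ i + 1), bot_inf_eq]
    exact bot_le
  · exact (fgSubcomplexTerm_spec h).2.2

end CochainComplex

theorem exists_finite_subcomplex_quasiIso
    (Ω : Type) [Ring Ω] [IsNoetherianRing Ω]
    (X : CochainComplex (ModuleCat Ω) ℤ)
    (hbdd : ∃ n : ℤ, ∀ i : ℤ, n ≤ i → Limits.IsZero (X.X i))
    (hfg : ∀ i : ℤ, Module.Finite Ω (X.homology i)) :
    ∃ (Y : CochainComplex (ModuleCat Ω) ℤ) (f : Y ⟶ X),
      (∀ i : ℤ, Module.Finite Ω (Y.X i)) ∧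
      (∀ i : ℤ, Function.Injective (f.f i)) ∧
      QuasiIso f := by
  obtain ⟨n, hn⟩ := hbdd
  refine ⟨X.subcomplex _ (X.d_mem_fgSubcomplexTerm n), X.subcomplexι _ _,
    fun j => Module.Finite.iff_fg.2 (X.fgSubcomplexTerm n j).2, X.subcomplexι_f_injective _ _, ?_⟩
  rw [quasiIso_iff]
  intro j
  exact X.quasiIsoAt_subcomplexι _ _ (by simp) (by simp)
    (X.ker_d_le_fgSubcomplexTerm_sup_range hn j) (X.fgSubcomplexTerm_inf_range_le n (by omega))
end

section
/- If R is flat as a ℤ_p-module, then for every n ≥ 0 the n-th power I^n of the augmentation ideal of R[Γ] is a free R-module of finite rank. -/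
/-!
STATEMENT 9: Let `p` be a prime, `Γ` a finite group and `R` a commutative `ℤ_p`-algebra
that is flat as a `ℤ_p`-module.  Let `I` be the augmentation ideal of the group algebra
`R[Γ]`, i.e. the kernel of the `R`-algebra map `R[Γ] → R` sending every element of `Γ`
to `1`.  Then for every `n ≥ 0`, the `n`-th power `I^n` is a free `R`-module of finite rank.
-/

open TensorProduct

section

variable (R : Type) [CommRing R] (Γ : Type) [Group Γ]

/-- The augmentation map `R[Γ] → R`, sending every element of `Γ` to `1`. -/
noncomputable def augmentation : MonoidAlgebra R Γ →ₐ[R] R :=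
  (MonoidAlgebra.lift R R Γ) 1

/-- The augmentation ideal of `R[Γ]`, as an `R`-submodule of `R[Γ]`. -/
noncomputable def augIdeal : Submodule R (MonoidAlgebra R Γ) :=
  Submodule.restrictScalars R (RingHom.ker (augmentation R Γ).toRingHom)

/-- The `n`-th power `I^n` of the augmentation ideal `I` (with `I^0` the whole group
algebra), as an `R`-submodule of `R[Γ]`. -/
noncomputable def augIdealPow : ℕ → Submodule R (MonoidAlgebra R Γ)
  | 0 => ⊤
  | n + 1 => augIdeal R Γ * augIdealPow n

end

/-!
Over the principal ideal domain `ℤ_[p]`, the power `I^n` of the augmentation ideal of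
`ℤ_[p][Γ]` is a submodule of the finite free module `ℤ_[p][Γ]`, hence free of finite rank.
The augmentation ideal is spanned by the elements `g - 1`, which are defined over `ℤ_[p]`, so
`I^n` for `R[Γ]` is the `R`-span of the image of `I^n` for `ℤ_[p][Γ]`. As `R` is flat over
`ℤ_[p]`, a `ℤ_[p]`-linearly independent family in `ℤ_[p][Γ]` stays `R`-linearly independent
in `R ⊗ ℤ_[p][Γ] = R[Γ]`, so a basis of the former maps to an `R`-basis of the latter.
-/

open MonoidAlgebra Submodule Set

theorem Submodule.span_image_span {S R M N F : Type*} [Semiring S] [Semiring R] [SMul S R]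
    [AddCommMonoid M] [AddCommMonoid N] [Module S M] [Module S N] [Module R N]
    [IsScalarTower S R N] [FunLike F M N] [LinearMapClass F S M N] (f : F) (s : Set M) :
    span R (f '' span S s) = span R (f '' s) := by
  calc span R (f '' span S s) = span R ((span S s).map (f : M →ₗ[S] N)) := rfl
    _ = span R (span S (f '' s)) := by rw [map_span]; rfl
    _ = span R (f '' s) := span_span_of_tower S R _

section FlatBaseChange

variable {S R : Type*} [CommRing S] [CommRing R] [Algebra S R] [Module.Flat S R] {κ : Type*}

theorem LinearIndependent.mapRange_algebraMap {X : Type*} {v : κ → X →₀ S}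
    (hv : LinearIndependent S v) :
    LinearIndependent R fun i ↦ Finsupp.mapRange (algebraMap S R) (map_zero _) (v i) := by
  classical
  have h : (fun i ↦ Finsupp.mapRange (algebraMap S R) (map_zero _) (v i)) =
      TensorProduct.finsuppScalarRight S R R X ∘ fun i ↦ (1 : R) ⊗ₜ[S] v i := by
    funext i
    ext x
    simp [TensorProduct.finsuppScalarRight_apply_tmul_apply, Algebra.algebraMap_eq_smul_one]
  rw [h]
  have h1 := Module.Flat.linearIndependent_one_tmul (S := R) hv
  exact h1.map' (TensorProduct.finsuppScalarRight S R R X).toLinearMap (LinearEquiv.ker _)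

theorem LinearIndependent.mapAlgHom_ofId {Γ : Type*} [Monoid Γ] {v : κ → S[Γ]}
    (hv : LinearIndependent S v) :
    LinearIndependent R (mapAlgHom Γ (Algebra.ofId S R) ∘ v) := by
  have h : mapAlgHom Γ (Algebra.ofId S R) ∘ v = (coeffLinearEquiv R).symm ∘
      fun i ↦ Finsupp.mapRange (algebraMap S R) (map_zero _) (coeffLinearEquiv S (v i)) := by
    funext i
    ext g
    simp
  rw [h]
  have h1 := (hv.map' _ (LinearEquiv.ker (coeffLinearEquiv S))).mapRange_algebraMap (R := R)
  exact h1.map' (coeffLinearEquiv R).symm.toLinearMap (LinearEquiv.ker _)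

theorem free_finite_span_image_mapAlgHom {Γ : Type*} [Monoid Γ] (M : Submodule S S[Γ])
    [Module.Free S M] [Module.Finite S M] :
    Module.Free R (span R (mapAlgHom Γ (Algebra.ofId S R) '' M)) ∧
      Module.Finite R (span R (mapAlgHom Γ (Algebra.ofId S R) '' M)) := by
  let b := Module.Free.chooseBasis S M
  have hM : span S (range (M.subtype ∘ b)) = M := by
    rw [range_comp, ← map_span, b.span_eq, map_subtype_top]
  have hli := (b.linearIndependent.map' M.subtype M.ker_subtype).mapAlgHom_ofId (R := R)
  rw [← hM, span_image_span, ← range_comp]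
  exact ⟨.of_basis (Module.Basis.span hli), Module.Finite.span_of_finite R (finite_range _)⟩

end FlatBaseChange

section Augmentation

variable (R : Type) [CommRing R] (Γ : Type) [Group Γ]

theorem augmentation_single (g : Γ) (r : R) : augmentation R Γ (single g r) = r := by
  simp [augmentation]

theorem mem_augIdeal {x : R[Γ]} : x ∈ augIdeal R Γ ↔ augmentation R Γ x = 0 := Iff.rfl

theorem sub_augmentation_smul_one_mem_span (x : R[Γ]) :
    x - augmentation R Γ x • 1 ∈ span R (range fun g : Γ ↦ single g (1 : R) - 1) := by
  induction x using MonoidAlgebra.induction_linear with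
  | zero => simp
  | add a b ha hb => simpa [add_smul, add_sub_add_comm] using add_mem ha hb
  | single g r =>
    have h : single g r - augmentation R Γ (single g r) • 1 = r • (single g (1 : R) - 1) := by
      rw [augmentation_single, smul_sub, smul_single, smul_eq_mul, mul_one]
    exact h ▸ smul_mem _ _ (subset_span ⟨g, rfl⟩)

theorem augIdeal_eq_span : augIdeal R Γ = span R (range fun g : Γ ↦ single g (1 : R) - 1) := by
  refine le_antisymm (fun x hx ↦ ?_) (span_le.mpr ?_)
  · simpa [(mem_augIdeal R Γ).mp hx] using sub_augmentation_smul_one_mem_span R Γ x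
  · rintro _ ⟨g, rfl⟩
    simp [mem_augIdeal, augmentation_single]

variable (S : Type) [CommRing S] [Algebra S R]

theorem top_eq_span_image_mapAlgHom :
    (⊤ : Submodule R R[Γ]) =
      span R (mapAlgHom Γ (Algebra.ofId S R) '' (⊤ : Submodule S S[Γ])) := by
  rw [← (basis Γ R).span_eq, ← (basis Γ S).span_eq, span_image_span, ← range_comp]
  congr
  funext g
  simp

theorem augIdeal_eq_span_image_mapAlgHom :
    augIdeal R Γ = span R (mapAlgHom Γ (Algebra.ofId S R) '' augIdeal S Γ) := by
  rw [augIdeal_eq_span, augIdeal_eq_span, span_image_span, ← range_comp]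
  congr
  funext g
  simp

theorem augIdealPow_eq_span_image_mapAlgHom (n : ℕ) :
    augIdealPow R Γ n = span R (mapAlgHom Γ (Algebra.ofId S R) '' augIdealPow S Γ n) := by
  induction n with
  | zero => exact top_eq_span_image_mapAlgHom R Γ S
  | succ n ih =>
    rw [augIdealPow, augIdealPow, augIdeal_eq_span_image_mapAlgHom R Γ S, ih, span_mul_span,
      ← image_mul, mul_def, span_image_span]

theorem augIdealPow_free_finite_of_flat [IsDomain S] [IsPrincipalIdealRing S] [Module.Flat S R]
    [Finite Γ] (n : ℕ) :
    Module.Free R (augIdealPow R Γ n) ∧ Module.Finite R (augIdealPow R Γ n) := by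
  rw [augIdealPow_eq_span_image_mapAlgHom R Γ S]
  exact free_finite_span_image_mapAlgHom _

end Augmentation

theorem augIdealPow_free_finite
    (p : ℕ) [Fact p.Prime]
    (R : Type) [CommRing R] [Algebra ℤ_[p] R] (hflat : Module.Flat ℤ_[p] R)
    (Γ : Type) [Group Γ] [Finite Γ] (n : ℕ) :
    Module.Free R (augIdealPow R Γ n) ∧ Module.Finite R (augIdealPow R Γ n) :=
  augIdealPow_free_finite_of_flat R Γ ℤ_[p] n
end
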